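/- arXiv:1903.02536 — 4 statements merged into one kernel-verified Lean document; each statement's English description precedes it below -/
import Mathlib

section
/- Let S : ℝᵐ × ℝⁿ → ℝ be C² and r ∈ ℝ. Along any solution of ẋ = -∇ₓS, ẏ = ∇_y S, the function L(t) = (1/2)‖∇ₓS(x(t),y(t))‖² + (1/2)‖∇_y S(x(t),y(t))‖² - r·S(x(t),y(t)) satisfies dL/dt = -⟪ẋ, (Hₓₓ - rI)ẋ⟫ + ⟪ẏ, (H_yy - rI)ẏ⟫. -/
open scoped RealInnerProductSpace

/-- Partial gradient of `S` with respect to the first (descent) variable. -/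
noncomputable def gradX {m n : ℕ}
    (S : EuclideanSpace ℝ (Fin m) × EuclideanSpace ℝ (Fin n) → ℝ)
    (p : EuclideanSpace ℝ (Fin m) × EuclideanSpace ℝ (Fin n)) : EuclideanSpace ℝ (Fin m) :=
  gradient (fun x => S (x, p.2)) p.1

/-- Partial gradient of `S` with respect to the second (ascent) variable. -/
noncomputable def gradY {m n : ℕ}
    (S : EuclideanSpace ℝ (Fin m) × EuclideanSpace ℝ (Fin n) → ℝ)
    (p : EuclideanSpace ℝ (Fin m) × EuclideanSpace ℝ (Fin n)) : EuclideanSpace ℝ (Fin n) :=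
  gradient (fun y => S (p.1, y)) p.2

/-- Partial Hessian of `S` in the first variable, as a continuous linear map. -/
noncomputable def hessXX {m n : ℕ}
    (S : EuclideanSpace ℝ (Fin m) × EuclideanSpace ℝ (Fin n) → ℝ)
    (p : EuclideanSpace ℝ (Fin m) × EuclideanSpace ℝ (Fin n)) :
    EuclideanSpace ℝ (Fin m) →L[ℝ] EuclideanSpace ℝ (Fin m) :=
  fderiv ℝ (fun x => gradient (fun x' => S (x', p.2)) x) p.1

/-- Partial Hessian of `S` in the second variable, as a continuous linear map. -/
noncomputable def hessYY {m n : ℕ}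
    (S : EuclideanSpace ℝ (Fin m) × EuclideanSpace ℝ (Fin n) → ℝ)
    (p : EuclideanSpace ℝ (Fin m) × EuclideanSpace ℝ (Fin n)) :
    EuclideanSpace ℝ (Fin n) →L[ℝ] EuclideanSpace ℝ (Fin n) :=
  fderiv ℝ (fun y => gradient (fun y' => S (p.1, y')) y) p.2

/-!
Write `a = ∇ₓS`, `b = ∇_yS` and `B = D²S` along the trajectory, whose velocity is `(-a, b)`.
The chain rule gives `⟪a, ȧ⟫ = B (-a, b) (a, 0)`, `⟪b, ḃ⟫ = B (-a, b) (0, b)` and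
`dS/dt = -‖a‖² + ‖b‖²`. Expanding, the mixed terms `B (a, 0) (0, b)` and `B (0, b) (a, 0)` enter
with opposite signs and cancel by the symmetry of the second derivative of a `C²` function,
leaving `-B (a, 0) (a, 0) + B (0, b) (0, b)`, i.e. the two partial Hessian quadratic forms.
-/

open InnerProductSpace ContinuousLinearMap
open scoped Gradient

section RieszComp

variable {G H : Type*} [NormedAddCommGroup G] [InnerProductSpace ℝ G] [CompleteSpace G]
  [NormedAddCommGroup H] [NormedSpace ℝ H]

/-- The Riesz representative in `G` of `L ∘ ι`. Since `E × F` carries no inner product, partial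
gradients are expressed as `rieszComp (inl ℝ E F)` and `rieszComp (inr ℝ E F)` of the derivative. -/
noncomputable def rieszComp (ι : G →L[ℝ] H) : (H →L[ℝ] ℝ) →L[ℝ] G :=
  (toDual ℝ G).symm.toContinuousLinearEquiv.toContinuousLinearMap ∘L (compL ℝ G H ℝ).flip ι

theorem inner_rieszComp_right (ι : G →L[ℝ] H) (L : H →L[ℝ] ℝ) (u : G) :
    ⟪u, rieszComp ι L⟫ = L (ι u) := by
  rw [real_inner_comm]
  exact toDual_symm_apply

theorem gradient_comp_eq_rieszComp {f : H → ℝ} {φ : G → H} {ι : G →L[ℝ] H} {v : G}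
    (hf : DifferentiableAt ℝ f (φ v)) (hφ : HasFDerivAt φ ι v) :
    ∇ (f ∘ φ) v = rieszComp ι (fderiv ℝ f (φ v)) := by
  refine ext_inner_left ℝ fun u => ?_
  rw [inner_rieszComp_right, inner_gradient_right, (hf.hasFDerivAt.comp v hφ).fderiv]
  rfl

end RieszComp

section PartialGradient

variable {E F : Type*} [NormedAddCommGroup E] [InnerProductSpace ℝ E]
  [NormedAddCommGroup F] [InnerProductSpace ℝ F] {f : E × F → ℝ}

theorem gradient_partial_fst [CompleteSpace E] {p : E × F} (hf : DifferentiableAt ℝ f p) :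
    ∇ (fun x => f (x, p.2)) p.1 = rieszComp (inl ℝ E F) (fderiv ℝ f p) :=
  gradient_comp_eq_rieszComp (φ := fun x => (x, p.2)) hf (hasFDerivAt_prodMk_left p.1 p.2)

theorem gradient_partial_snd [CompleteSpace F] {p : E × F} (hf : DifferentiableAt ℝ f p) :
    ∇ (fun y => f (p.1, y)) p.2 = rieszComp (inr ℝ E F) (fderiv ℝ f p) :=
  gradient_comp_eq_rieszComp (φ := fun y => (p.1, y)) hf (hasFDerivAt_prodMk_right p.1 p.2)

theorem fderiv_apply_eq_inner_gradient_partial [CompleteSpace E] [CompleteSpace F] {p : E × F}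
    (hf : DifferentiableAt ℝ f p) (u : E) (v : F) :
    fderiv ℝ f p (u, v) = ⟪u, ∇ (fun x => f (x, p.2)) p.1⟫ + ⟪v, ∇ (fun y => f (p.1, y)) p.2⟫ := by
  rw [gradient_partial_fst hf, gradient_partial_snd hf, inner_rieszComp_right,
    inner_rieszComp_right, ← map_add, inl_apply, inr_apply, Prod.mk_add_mk, add_zero, zero_add]

theorem hasFDerivAt_gradient_partial_fst [CompleteSpace E] (hf : ContDiff ℝ 2 f) (p : E × F) :
    HasFDerivAt (fun q : E × F => ∇ (fun x => f (x, q.2)) q.1)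
      (rieszComp (inl ℝ E F) ∘L fderiv ℝ (fderiv ℝ f) p) p := by
  have hfun : (fun q : E × F => ∇ (fun x => f (x, q.2)) q.1)
      = fun q => rieszComp (inl ℝ E F) (fderiv ℝ f q) :=
    funext fun q => gradient_partial_fst (hf.differentiable two_ne_zero q)
  rw [hfun]
  exact (rieszComp _).hasFDerivAt.comp p
    ((hf.fderiv_right one_add_one_eq_two.le).differentiable one_ne_zero p).hasFDerivAt

theorem hasFDerivAt_gradient_partial_snd [CompleteSpace F] (hf : ContDiff ℝ 2 f) (p : E × F) :
    HasFDerivAt (fun q : E × F => ∇ (fun y => f (q.1, y)) q.2)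
      (rieszComp (inr ℝ E F) ∘L fderiv ℝ (fderiv ℝ f) p) p := by
  have hfun : (fun q : E × F => ∇ (fun y => f (q.1, y)) q.2)
      = fun q => rieszComp (inr ℝ E F) (fderiv ℝ f q) :=
    funext fun q => gradient_partial_snd (hf.differentiable two_ne_zero q)
  rw [hfun]
  exact (rieszComp _).hasFDerivAt.comp p
    ((hf.fderiv_right one_add_one_eq_two.le).differentiable one_ne_zero p).hasFDerivAt

theorem fderiv_gradient_partial_fst_apply [CompleteSpace E] (hf : ContDiff ℝ 2 f) (p : E × F)
    (u : E) :
    fderiv ℝ (fun x => ∇ (fun x' => f (x', p.2)) x) p.1 u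
      = rieszComp (inl ℝ E F) (fderiv ℝ (fderiv ℝ f) p (u, 0)) := by
  have h : HasFDerivAt (fun x => ∇ (fun x' => f (x', p.2)) x)
      ((rieszComp (inl ℝ E F) ∘L fderiv ℝ (fderiv ℝ f) p) ∘L inl ℝ E F) p.1 :=
    (hasFDerivAt_gradient_partial_fst hf p).comp p.1 (f := fun x => (x, p.2))
      (hasFDerivAt_prodMk_left p.1 p.2)
  rw [h.fderiv]
  rfl

theorem fderiv_gradient_partial_snd_apply [CompleteSpace F] (hf : ContDiff ℝ 2 f) (p : E × F)
    (u : F) :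
    fderiv ℝ (fun y => ∇ (fun y' => f (p.1, y')) y) p.2 u
      = rieszComp (inr ℝ E F) (fderiv ℝ (fderiv ℝ f) p (0, u)) := by
  have h : HasFDerivAt (fun y => ∇ (fun y' => f (p.1, y')) y)
      ((rieszComp (inr ℝ E F) ∘L fderiv ℝ (fderiv ℝ f) p) ∘L inr ℝ E F) p.2 :=
    (hasFDerivAt_gradient_partial_snd hf p).comp p.2 (f := fun y => (p.1, y))
      (hasFDerivAt_prodMk_right p.1 p.2)
  rw [h.fderiv]
  rfl

end PartialGradient

theorem energy_derivative_along_trajectory {m n : ℕ}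
    (S : EuclideanSpace ℝ (Fin m) × EuclideanSpace ℝ (Fin n) → ℝ)
    (hS : ContDiff ℝ 2 S) (r : ℝ)
    (x : ℝ → EuclideanSpace ℝ (Fin m)) (y : ℝ → EuclideanSpace ℝ (Fin n))
    (hx : ∀ t, HasDerivAt x (-(gradX S (x t, y t))) t)
    (hy : ∀ t, HasDerivAt y (gradY S (x t, y t)) t) :
    ∀ t, HasDerivAt
      (fun s => (1 / 2) * ‖gradX S (x s, y s)‖ ^ 2 + (1 / 2) * ‖gradY S (x s, y s)‖ ^ 2
        - r * S (x s, y s))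
      (-(⟪-(gradX S (x t, y t)), hessXX S (x t, y t) (-(gradX S (x t, y t)))⟫
          - r * ‖-(gradX S (x t, y t))‖ ^ 2)
        + (⟪gradY S (x t, y t), hessYY S (x t, y t) (gradY S (x t, y t))⟫
          - r * ‖gradY S (x t, y t)‖ ^ 2)) t := by
  intro t
  set p := (x t, y t)
  set a := gradX S p
  set b := gradY S p
  set B := fderiv ℝ (fderiv ℝ S) p
  have hγ : HasDerivAt (fun s => (x s, y s)) (-a, b) t := (hx t).prodMk (hy t)
  have ha : HasDerivAt (fun s => gradX S (x s, y s)) (rieszComp (inl ℝ _ _) (B (-a, b))) t :=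
    (hasFDerivAt_gradient_partial_fst hS p).comp_hasDerivAt (f := fun s => (x s, y s)) t hγ
  have hb : HasDerivAt (fun s => gradY S (x s, y s)) (rieszComp (inr ℝ _ _) (B (-a, b))) t :=
    (hasFDerivAt_gradient_partial_snd hS p).comp_hasDerivAt (f := fun s => (x s, y s)) t hγ
  have hd := hS.differentiable two_ne_zero p
  refine (((ha.norm_sq.const_mul (1 / 2)).add (hb.norm_sq.const_mul (1 / 2))).sub
    ((hd.hasFDerivAt.comp_hasDerivAt t hγ).const_mul r)).congr_deriv ?_
  have hDSγ : fderiv ℝ S p (-a, b) = -‖a‖ ^ 2 + ‖b‖ ^ 2 := by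
    rw [fderiv_apply_eq_inner_gradient_partial hd]
    change ⟪-a, a⟫ + ⟪b, b⟫ = _
    rw [inner_neg_left, real_inner_self_eq_norm_sq, real_inner_self_eq_norm_sq]
  have hsymm : B (a, 0) (0, b) = B (0, b) (a, 0) :=
    (hS.contDiffAt.isSymmSndFDerivAt (by simp)).eq _ _
  have hv : ((-a, b) : _ × _) = -(a, 0) + (0, b) := by simp
  have hna : ((-a, 0) : _ × EuclideanSpace ℝ (Fin n)) = -(a, 0) := by simp
  change 1 / 2 * (2 * ⟪a, _⟫) + 1 / 2 * (2 * ⟪b, _⟫) - _ = _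
  rw [hDSγ]
  simp only [hessXX, hessYY, fderiv_gradient_partial_fst_apply hS,
    fderiv_gradient_partial_snd_apply hS, inner_rieszComp_right, inl_apply, inr_apply]
  rw [hv, hna]
  simp only [map_add, map_neg, add_apply, neg_apply, norm_neg, hsymm]
  ring
end

section
/- Let S : ℝᵐ × ℝⁿ → ℝ be C². Suppose there exists μ > 0 with ⟪u, ∇²ₓₓS(x,y) u⟫ ≥ μ‖u‖² for all (x,y), u; there exists ν < μ with ⟪v, ∇²_yyS(x,y) v⟫ ≤ ν‖v‖² for all (x,y), v; and the function y ↦ -V(y) = -minₓ S(x,y) is coercive. Then every solution of ẋ = -∇ₓS, ẏ = ∇_y S is bounded on its interval of existence. -/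
set_option maxHeartbeats 1000000


open scoped RealInnerProductSpace

open InnerProductSpace ContinuousLinearMap Filter

section Aux

variable {m n : ℕ}
variable (S : EuclideanSpace ℝ (Fin m) × EuclideanSpace ℝ (Fin n) → ℝ)

local notation "Em" => EuclideanSpace ℝ (Fin m)
local notation "Fn" => EuclideanSpace ℝ (Fin n)
local notation "P" => EuclideanSpace ℝ (Fin m) × EuclideanSpace ℝ (Fin n)

noncomputable def PhiX : (P →L[ℝ] ℝ) →L[ℝ] Em :=
  ((toDual ℝ Em).symm.toContinuousLinearEquiv : StrongDual ℝ Em ≃L[ℝ] Em).toContinuousLinearMap.comp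
    ((compL ℝ Em P ℝ).flip (inl ℝ Em Fn))

noncomputable def PhiY : (P →L[ℝ] ℝ) →L[ℝ] Fn :=
  ((toDual ℝ Fn).symm.toContinuousLinearEquiv : StrongDual ℝ Fn ≃L[ℝ] Fn).toContinuousLinearMap.comp
    ((compL ℝ Fn P ℝ).flip (inr ℝ Em Fn))

lemma PhiX_apply (B : P →L[ℝ] ℝ) : PhiX (m := m) (n := n) B = (toDual ℝ Em).symm (B.comp (inl ℝ Em Fn)) := rfl

lemma PhiY_apply (B : P →L[ℝ] ℝ) : PhiY (m := m) (n := n) B = (toDual ℝ Fn).symm (B.comp (inr ℝ Em Fn)) := rfl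

lemma inner_PhiX (B : P →L[ℝ] ℝ) (u : Em) : ⟪PhiX B, u⟫ = B (u, 0) := by
  rw [PhiX_apply, toDual_symm_apply]; rfl

lemma inner_PhiY (B : P →L[ℝ] ℝ) (v : Fn) : ⟪PhiY B, v⟫ = B (0, v) := by
  rw [PhiY_apply, toDual_symm_apply]; rfl

variable (hS : Differentiable ℝ S)
include hS

lemma gradX_eq (p : P) :
    gradX S p = PhiX (fderiv ℝ S p) := by
  rw [PhiX_apply, gradX, gradient]
  congr 1
  have h1 : HasFDerivAt (fun x : Em => S (x, p.2)) ((fderiv ℝ S p).comp (inl ℝ Em Fn)) p.1 := by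
    have := ((hS p).hasFDerivAt (x := p)).comp p.1 (hasFDerivAt_prodMk_left (𝕜 := ℝ) p.1 p.2)
    exact this
  exact h1.fderiv

lemma gradY_eq (p : P) :
    gradY S p = PhiY (fderiv ℝ S p) := by
  rw [PhiY_apply, gradY, gradient]
  congr 1
  have h1 : HasFDerivAt (fun y : Fn => S (p.1, y)) ((fderiv ℝ S p).comp (inr ℝ Em Fn)) p.2 := by
    have := ((hS p).hasFDerivAt (x := p)).comp p.2 (hasFDerivAt_prodMk_right (𝕜 := ℝ) p.1 p.2)
    exact this
  exact h1.fderiv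

lemma fderiv_apply_eq (p : P) (u : Em) (v : Fn) :
    fderiv ℝ S p (u, v) = ⟪gradX S p, u⟫ + ⟪gradY S p, v⟫ := by
  rw [gradX_eq S hS, gradY_eq S hS, inner_PhiX, inner_PhiY]
  have : (u, v) = ((u, 0) + (0, v) : P) := by simp
  rw [this, map_add]


variable (hS2 : ContDiff ℝ 2 S)
omit hS
include hS2

lemma fderivS_diff : Differentiable ℝ (fderiv ℝ S) :=
  (hS2.fderiv_right (m := 1) (by norm_num)).differentiable one_ne_zero

lemma gradX_hasFDerivAt (p : P) :
    HasFDerivAt (gradX S) ((PhiX (m := m) (n := n)).comp (fderiv ℝ (fderiv ℝ S) p)) p := by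
  have hg : (gradX S) = fun q => PhiX (fderiv ℝ S q) :=
    funext (gradX_eq S (hS2.differentiable (by norm_num)))
  rw [hg]
  exact (PhiX.hasFDerivAt).comp p ((fderivS_diff S hS2 p).hasFDerivAt)

lemma gradY_hasFDerivAt (p : P) :
    HasFDerivAt (gradY S) ((PhiY (m := m) (n := n)).comp (fderiv ℝ (fderiv ℝ S) p)) p := by
  have hg : (gradY S) = fun q => PhiY (fderiv ℝ S q) :=
    funext (gradY_eq S (hS2.differentiable (by norm_num)))
  rw [hg]
  exact (PhiY.hasFDerivAt).comp p ((fderivS_diff S hS2 p).hasFDerivAt)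

lemma hessXX_eq (p : P) :
    hessXX S p = ((PhiX (m := m) (n := n)).comp (fderiv ℝ (fderiv ℝ S) p)).comp (inl ℝ Em Fn) := by
  have h0 : (fun x : Em => gradient (fun x' => S (x', p.2)) x)
      = (gradX S) ∘ (fun x : Em => (x, p.2)) := rfl
  rw [hessXX, h0]
  have h := gradX_hasFDerivAt S hS2 (p.1, p.2)
  rw [Prod.mk.eta] at h
  exact (h.comp p.1 (hasFDerivAt_prodMk_left (𝕜 := ℝ) p.1 p.2)).fderiv

lemma hessYY_eq (p : P) :
    hessYY S p = ((PhiY (m := m) (n := n)).comp (fderiv ℝ (fderiv ℝ S) p)).comp (inr ℝ Em Fn) := by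
  have h0 : (fun y : Fn => gradient (fun y' => S (p.1, y')) y)
      = (gradY S) ∘ (fun y : Fn => (p.1, y)) := rfl
  rw [hessYY, h0]
  have h := gradY_hasFDerivAt S hS2 (p.1, p.2)
  rw [Prod.mk.eta] at h
  exact (h.comp p.2 (hasFDerivAt_prodMk_right (𝕜 := ℝ) p.1 p.2)).fderiv

lemma inner_hessXX (p : P) (u : Em) :
    ⟪u, hessXX S p u⟫ = fderiv ℝ (fderiv ℝ S) p (u, 0) (u, 0) := by
  rw [hessXX_eq S hS2, real_inner_comm]
  exact inner_PhiX _ u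

lemma inner_hessYY (p : P) (v : Fn) :
    ⟪v, hessYY S p v⟫ = fderiv ℝ (fderiv ℝ S) p (0, v) (0, v) := by
  rw [hessYY_eq S hS2, real_inner_comm]
  exact inner_PhiY _ v

lemma snd_sym (p : P) (a b : P) :
    fderiv ℝ (fderiv ℝ S) p a b = fderiv ℝ (fderiv ℝ S) p b a :=
  (hS2.contDiffAt.isSymmSndFDerivAt (by simp [minSmoothness_of_isRCLikeNormedField])) a b

lemma strong_convex {μ : ℝ}
    (hHessX : ∀ p, ∀ u : Em, μ * ‖u‖ ^ 2 ≤ ⟪u, hessXX S p u⟫)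
    (a b : Em) (c : Fn) :
    S (a, c) + ⟪gradX S (a, c), b - a⟫ + μ / 2 * ‖b - a‖ ^ 2 ≤ S (b, c) := by
  have hdiff : Differentiable ℝ S := hS2.differentiable (by norm_num)
  set d : Em := b - a with hd
  set γ : ℝ → P := fun t => (a + t • d, c) with hγdef
  have hγ : ∀ t : ℝ, HasDerivAt γ ((d, 0) : P) t := by
    intro t
    have h1 : HasDerivAt (fun t : ℝ => a + t • d) d t := by
      simpa using ((hasDerivAt_id t).smul_const d).const_add a
    exact h1.prodMk (hasDerivAt_const t c)
  have hφ : ∀ t : ℝ, HasDerivAt (fun s => S (γ s)) (fderiv ℝ S (γ t) (d, 0)) t := fun t =>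
    ((hdiff (γ t)).hasFDerivAt).comp_hasDerivAt t (hγ t)
  set ψ : ℝ → ℝ := fun s => fderiv ℝ S (γ s) ((d, 0) : P) with hψdef
  have hψ : ∀ t : ℝ, HasDerivAt ψ (fderiv ℝ (fderiv ℝ S) (γ t) ((d, 0) : P) ((d, 0) : P)) t := by
    intro t
    have h1 : HasDerivAt (fun s => fderiv ℝ S (γ s)) ((fderiv ℝ (fderiv ℝ S) (γ t)) ((d, 0) : P)) t :=
      ((fderivS_diff S hS2 (γ t)).hasFDerivAt).comp_hasDerivAt t (hγ t)
    simpa using h1.clm_apply (hasDerivAt_const t ((d, 0) : P))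
  set K : ℝ := μ * ‖d‖ ^ 2 with hK
  have hψlb : ∀ t : ℝ, K ≤ fderiv ℝ (fderiv ℝ S) (γ t) ((d, 0) : P) ((d, 0) : P) := by
    intro t
    rw [← inner_hessXX S hS2 (γ t) d]
    exact hHessX (γ t) d
  have hmono1 : Monotone (fun t => ψ t - K * t) := by
    apply monotone_of_deriv_nonneg
    · exact fun t => ((hψ t).sub (by simpa using (hasDerivAt_id t).const_mul K)).differentiableAt
    · intro t
      have hder : HasDerivAt (fun t => ψ t - K * t)
          (fderiv ℝ (fderiv ℝ S) (γ t) ((d, 0) : P) ((d, 0) : P) - K) t :=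
        (hψ t).sub (by simpa using (hasDerivAt_id t).const_mul K)
      rw [hder.deriv]
      linarith [hψlb t]
  have hψge : ∀ t : ℝ, 0 ≤ t → ψ 0 + K * t ≤ ψ t := by
    intro t ht
    have := hmono1 ht
    simp only [mul_zero, sub_zero] at this
    linarith
  set g : ℝ → ℝ := fun t => S (γ t) - ψ 0 * t - K / 2 * t ^ 2 with hgdef
  have hg : ∀ t : ℝ, HasDerivAt g (fderiv ℝ S (γ t) ((d, 0) : P) - ψ 0 - K * t) t := by
    intro t
    have h2 : HasDerivAt (fun t : ℝ => ψ 0 * t) (ψ 0) t := by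
      simpa using (hasDerivAt_id t).const_mul (ψ 0)
    have h3 : HasDerivAt (fun t : ℝ => K / 2 * t ^ 2) (K * t) t := by
      have := (hasDerivAt_pow 2 t).const_mul (K / 2)
      refine this.congr_deriv ?_
      ring
    exact ((hφ t).sub h2).sub h3
  have hmono2 : MonotoneOn g (Set.Ici (0 : ℝ)) := by
    apply monotoneOn_of_deriv_nonneg (convex_Ici 0)
    · exact fun t _ => (hg t).continuousAt.continuousWithinAt
    · exact fun t _ => (hg t).differentiableAt.differentiableWithinAt
    · intro t ht
      rw [interior_Ici] at ht
      rw [(hg t).deriv]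
      have := hψge t (le_of_lt ht)
      simp only [hψdef] at this
      linarith
  have h01 := hmono2 (Set.self_mem_Ici) (by norm_num : (1:ℝ) ∈ Set.Ici (0:ℝ)) zero_le_one
  have hγ0 : γ 0 = (a, c) := by simp [hγdef]
  have hγ1 : γ 1 = (b, c) := by simp [hγdef, hd]
  have hψ0 : ψ 0 = ⟪gradX S (a, c), d⟫ := by
    rw [hψdef]
    simp only [hγ0]
    rw [fderiv_apply_eq S hdiff (a, c) d 0]
    simp
  simp only [hgdef, hγ0, hγ1, hψ0] at h01
  rw [hK] at h01
  simp only [hd] at h01 ⊢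
  nlinarith [h01]

lemma quad_lb {μ : ℝ} (hμ : 0 < μ)
    (hHessX : ∀ p, ∀ u : Em, μ * ‖u‖ ^ 2 ≤ ⟪u, hessXX S p u⟫)
    (a b : Em) (c : Fn) :
    S (a, c) - ‖gradX S (a, c)‖ ^ 2 / (2 * μ) ≤ S (b, c) := by
  have h := strong_convex S hS2 hHessX a b c
  have hinner : -(‖gradX S (a, c)‖ * ‖b - a‖) ≤ ⟪gradX S (a, c), b - a⟫ := by
    have := real_inner_le_norm (gradX S (a, c)) (-(b - a))
    rw [inner_neg_right, norm_neg] at this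
    linarith
  have h2μ : (0:ℝ) < 2 * μ := by linarith
  have hq : ‖gradX S (a, c)‖ ^ 2 = ‖gradX S (a, c)‖ ^ 2 / (2 * μ) * (2 * μ) := by field_simp
  nlinarith [sq_nonneg (‖gradX S (a, c)‖ - μ * ‖b - a‖), hq, h2μ]

end Aux

theorem bounded_trajectories_case1 {m n : ℕ}
    (S : EuclideanSpace ℝ (Fin m) × EuclideanSpace ℝ (Fin n) → ℝ)
    (hS : ContDiff ℝ 2 S) (μ ν : ℝ) (hμ : 0 < μ) (hνμ : ν < μ)
    (hHessX : ∀ p, ∀ u : EuclideanSpace ℝ (Fin m), μ * ‖u‖ ^ 2 ≤ ⟪u, hessXX S p u⟫)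
    (hHessY : ∀ p, ∀ v : EuclideanSpace ℝ (Fin n), ⟪v, hessYY S p v⟫ ≤ ν * ‖v‖ ^ 2)
    (hV : Filter.Tendsto (fun y : EuclideanSpace ℝ (Fin n) => -(⨅ x, S (x, y)))
      (Filter.cocompact (EuclideanSpace ℝ (Fin n))) Filter.atTop)
    (x : ℝ → EuclideanSpace ℝ (Fin m)) (y : ℝ → EuclideanSpace ℝ (Fin n))
    (hx : ∀ t ∈ Set.Ici (0 : ℝ), HasDerivAt x (-(gradX S (x t, y t))) t)
    (hy : ∀ t ∈ Set.Ici (0 : ℝ), HasDerivAt y (gradY S (x t, y t)) t) :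
    Bornology.IsBounded ((fun t => (x t, y t)) '' Set.Ici (0 : ℝ)) := by
  classical
  have hdiff : Differentiable ℝ S := hS.differentiable (by norm_num)
  -- the constant r
  set r : ℝ := (μ + max ν 0) / 2 with hrdef
  have hmax0 : 0 ≤ max ν 0 := le_max_right ν 0
  have hmaxν : ν ≤ max ν 0 := le_max_left ν 0
  have hmaxμ : max ν 0 < μ := max_lt hνμ hμ
  have hr0 : 0 < r := by rw [hrdef]; linarith
  have hrν : ν ≤ r := by rw [hrdef]; linarith
  have hrμ : r < μ := by rw [hrdef]; linarith
  -- the value function V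
  set V : EuclideanSpace ℝ (Fin n) → ℝ := fun y' => ⨅ x', S (x', y') with hVdef
  have hV' : Filter.Tendsto (fun y' => -(V y'))
      (Filter.cocompact (EuclideanSpace ℝ (Fin n))) Filter.atTop := hV
  have hbdd : ∀ y' : EuclideanSpace ℝ (Fin n), BddBelow (Set.range fun x' => S (x', y')) := by
    intro y'
    refine ⟨S (0, y') - ‖gradX S (0, y')‖ ^ 2 / (2 * μ), ?_⟩
    rintro s ⟨x', rfl⟩
    exact quad_lb S hS hμ hHessX 0 x' y'
  have hVle : ∀ x' y', V y' ≤ S (x', y') := fun x' y' => ciInf_le (hbdd y') x'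
  have hVge : ∀ x' y', S (x', y') - ‖gradX S (x', y')‖ ^ 2 / (2 * μ) ≤ V y' :=
    fun x' y' => le_ciInf fun b => quad_lb S hS hμ hHessX x' b y'
  -- the Lyapunov function
  set gX : ℝ → EuclideanSpace ℝ (Fin m) := fun t => gradX S (x t, y t) with hgXdef
  set gY : ℝ → EuclideanSpace ℝ (Fin n) := fun t => gradY S (x t, y t) with hgYdef
  set L : ℝ → ℝ := fun t => ‖gX t‖ ^ 2 / 2 + ‖gY t‖ ^ 2 / 2 - r * S (x t, y t) with hLdef
  set D : ℝ → ℝ := fun t =>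
    fderiv ℝ (fderiv ℝ S) (x t, y t) (-(gX t), gY t) (gX t, 0)
      + fderiv ℝ (fderiv ℝ S) (x t, y t) (-(gX t), gY t) (0, gY t)
      - r * (fderiv ℝ S (x t, y t) (-(gX t), gY t)) with hDdef
  have key : ∀ t ∈ Set.Ici (0 : ℝ), HasDerivAt L (D t) t := by
    intro t ht
    have hp : HasDerivAt (fun s => (x s, y s)) ((-(gX t), gY t) :
        EuclideanSpace ℝ (Fin m) × EuclideanSpace ℝ (Fin n)) t := (hx t ht).prodMk (hy t ht)
    have hu : HasDerivAt gX (PhiX ((fderiv ℝ (fderiv ℝ S) (x t, y t)) (-(gX t), gY t))) t := by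
      have := (gradX_hasFDerivAt S hS (x t, y t)).comp_hasDerivAt t hp
      exact this
    have hv : HasDerivAt gY (PhiY ((fderiv ℝ (fderiv ℝ S) (x t, y t)) (-(gX t), gY t))) t := by
      have := (gradY_hasFDerivAt S hS (x t, y t)).comp_hasDerivAt t hp
      exact this
    have hS' : HasDerivAt (fun s => S (x s, y s))
        (fderiv ℝ S (x t, y t) (-(gX t), gY t)) t :=
      (hdiff (x t, y t)).hasFDerivAt.comp_hasDerivAt t hp
    have h1 : HasDerivAt (fun s => ‖gX s‖ ^ 2)
        (2 * fderiv ℝ (fderiv ℝ S) (x t, y t) (-(gX t), gY t) (gX t, 0)) t := by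
      have h := HasDerivAt.inner ℝ hu hu
      simp only [real_inner_self_eq_norm_sq] at h
      refine h.congr_deriv ?_
      rw [inner_PhiX, real_inner_comm, inner_PhiX]
      ring
    have h2 : HasDerivAt (fun s => ‖gY s‖ ^ 2)
        (2 * fderiv ℝ (fderiv ℝ S) (x t, y t) (-(gX t), gY t) (0, gY t)) t := by
      have h := HasDerivAt.inner ℝ hv hv
      simp only [real_inner_self_eq_norm_sq] at h
      refine h.congr_deriv ?_
      rw [inner_PhiY, real_inner_comm, inner_PhiY]
      ring
    have h3 := ((h1.div_const 2).add (h2.div_const 2)).sub (hS'.const_mul r)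
    rw [hLdef, hDdef]
    refine h3.congr_deriv ?_
    ring
  have hDle : ∀ t, D t ≤ 0 := by
    intro t
    rw [hDdef]
    simp only [hgXdef, hgYdef]
    set u : EuclideanSpace ℝ (Fin m) := gradX S (x t, y t) with hu
    set v : EuclideanSpace ℝ (Fin n) := gradY S (x t, y t) with hvv
    have hsplit : ((-u, v) : EuclideanSpace ℝ (Fin m) × EuclideanSpace ℝ (Fin n))
        = -((u, 0) : EuclideanSpace ℝ (Fin m) × EuclideanSpace ℝ (Fin n))
          + ((0, v) : EuclideanSpace ℝ (Fin m) × EuclideanSpace ℝ (Fin n)) := by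
      simp [Prod.ext_iff]
    rw [hsplit]
    simp only [map_add, map_neg, ContinuousLinearMap.add_apply, ContinuousLinearMap.neg_apply]
    have hxx := inner_hessXX S hS (x t, y t) u
    have hyy := inner_hessYY S hS (x t, y t) v
    have hsym := snd_sym S hS (x t, y t) ((u, 0)) ((0, v))
    have hBX := hHessX (x t, y t) u
    have hBY := hHessY (x t, y t) v
    rw [hxx] at hBX
    rw [hyy] at hBY
    have hfx1 : fderiv ℝ S (x t, y t)
        ((u, 0) : EuclideanSpace ℝ (Fin m) × EuclideanSpace ℝ (Fin n)) = ‖u‖ ^ 2 := by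
      rw [fderiv_apply_eq S hdiff, ← hu, inner_zero_right, add_zero,
        real_inner_self_eq_norm_sq]
    have hfx2 : fderiv ℝ S (x t, y t)
        ((0, v) : EuclideanSpace ℝ (Fin m) × EuclideanSpace ℝ (Fin n)) = ‖v‖ ^ 2 := by
      rw [fderiv_apply_eq S hdiff, ← hvv, inner_zero_right, zero_add,
        real_inner_self_eq_norm_sq]
    rw [hfx1, hfx2]
    nlinarith [sq_nonneg ‖u‖, sq_nonneg ‖v‖, hBX, hBY, hrν, hrμ, hsym]
  have hanti : AntitoneOn L (Set.Ici (0 : ℝ)) := by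
    apply antitoneOn_of_deriv_nonpos (convex_Ici 0)
    · exact fun t ht => (key t ht).continuousAt.continuousWithinAt
    · intro t ht
      rw [interior_Ici] at ht
      exact (key t (Set.mem_Ici.mpr (le_of_lt ht))).differentiableAt.differentiableWithinAt
    · intro t ht
      rw [interior_Ici] at ht
      rw [(key t (Set.mem_Ici.mpr (le_of_lt ht))).deriv]
      exact hDle t
  have hLle : ∀ t ∈ Set.Ici (0 : ℝ), L t ≤ L 0 := fun t ht =>
    hanti Set.self_mem_Ici ht ht
  clear_value r V gX gY L D
  -- bound on -V (y t)
  have hq : ∀ t : ℝ, S (x t, y t) ≤ V (y t) + ‖gX t‖ ^ 2 / (2 * μ) := by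
    intro t
    have h := hVge (x t) (y t)
    simp only [hgXdef]
    linarith
  have hcoef : 0 < 1 / 2 - r / (2 * μ) := by
    have h1 : r / (2 * μ) < 1 / 2 := by
      rw [div_lt_div_iff₀ (by linarith) (by norm_num)]
      linarith
    linarith
  have hLlower : ∀ t ∈ Set.Ici (0 : ℝ),
      (1 / 2 - r / (2 * μ)) * ‖gX t‖ ^ 2 + ‖gY t‖ ^ 2 / 2 - r * V (y t) ≤ L 0 := by
    intro t ht
    refine le_trans ?_ (hLle t ht)
    simp only [hLdef]
    have h3 : r * S (x t, y t) ≤ r * (V (y t) + ‖gX t‖ ^ 2 / (2 * μ)) :=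
      mul_le_mul_of_nonneg_left (hq t) (le_of_lt hr0)
    have h4 : r * (V (y t) + ‖gX t‖ ^ 2 / (2 * μ))
        = r * V (y t) + r / (2 * μ) * ‖gX t‖ ^ 2 := by ring
    rw [h4] at h3
    linarith
  have hyb : ∀ t ∈ Set.Ici (0 : ℝ), -(V (y t)) ≤ L 0 / r := by
    intro t ht
    rw [le_div_iff₀ hr0]
    have := hLlower t ht
    nlinarith [mul_nonneg (le_of_lt hcoef) (sq_nonneg ‖gX t‖), sq_nonneg ‖gY t‖]
  -- compact set containing the y-trajectory
  have hev := hV'.eventually (Filter.eventually_gt_atTop (L 0 / r))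
  obtain ⟨K, hKc, hKsub⟩ := Filter.mem_cocompact.mp hev
  have hyK : ∀ t ∈ Set.Ici (0 : ℝ), y t ∈ K := by
    intro t ht
    by_contra hyt
    exact absurd (hyb t ht) (not_le.mpr (hKsub hyt))
  obtain ⟨Ry, hRy⟩ := isBounded_iff_forall_norm_le.mp hKc.isBounded
  -- bounds over K
  have hgXcont : Continuous (gradX S) := by
    have hgr : (gradX S) = fun q => PhiX (fderiv ℝ S q) := funext (gradX_eq S hdiff)
    rw [hgr]
    exact PhiX.continuous.comp (hS.continuous_fderiv (by norm_num))
  obtain ⟨C1, hC1⟩ := hKc.exists_bound_of_continuousOn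
    ((hS.continuous.comp (continuous_const.prodMk continuous_id)).continuousOn
      (s := K) : ContinuousOn (fun z : EuclideanSpace ℝ (Fin n) => S (0, z)) K)
  obtain ⟨C2, hC2⟩ := hKc.exists_bound_of_continuousOn
    ((hgXcont.comp (continuous_const.prodMk continuous_id)).continuousOn
      (s := K) : ContinuousOn (fun z : EuclideanSpace ℝ (Fin n) => gradX S (0, z)) K)
  have hy0K : y 0 ∈ K := hyK 0 Set.self_mem_Ici
  have hC1b : ∀ z ∈ K, |S (0, z)| ≤ C1 := fun z hz => by
    have h := hC1 z hz
    simpa [Function.comp, Real.norm_eq_abs] using h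
  have hC2b : ∀ z ∈ K, ‖gradX S (0, z)‖ ≤ C2 := fun z hz => by
    have h := hC2 z hz
    simpa [Function.comp] using h
  have hC1' : 0 ≤ C1 := le_trans (abs_nonneg _) (hC1b (y 0) hy0K)
  have hC2' : 0 ≤ C2 := le_trans (norm_nonneg _) (hC2b (y 0) hy0K)
  have hVC1 : ∀ t ∈ Set.Ici (0 : ℝ), V (y t) ≤ C1 := by
    intro t ht
    refine le_trans (hVle 0 (y t)) ?_
    exact le_trans (le_abs_self _) (hC1b (y t) (hyK t ht))
  have hSnegC1 : ∀ t ∈ Set.Ici (0 : ℝ), -C1 ≤ S (0, y t) := by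
    intro t ht
    have h := hC1b (y t) (hyK t ht)
    linarith [neg_abs_le (S (0, y t))]
  -- bound on the gradient gX
  obtain ⟨Bx, hBxdef⟩ : ∃ b : ℝ, b = (L 0 + r * C1) / (1 / 2 - r / (2 * μ)) := ⟨_, rfl⟩
  have hgXb : ∀ t ∈ Set.Ici (0 : ℝ), ‖gX t‖ ^ 2 ≤ Bx := by
    intro t ht
    rw [hBxdef, le_div_iff₀ hcoef]
    have h1 := hLlower t ht
    have h2 : r * V (y t) ≤ r * C1 := mul_le_mul_of_nonneg_left (hVC1 t ht) (le_of_lt hr0)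
    nlinarith [sq_nonneg ‖gY t‖]
  -- bound on S along the trajectory
  obtain ⟨MS, hMSdef⟩ : ∃ b : ℝ, b = C1 + Bx / (2 * μ) := ⟨_, rfl⟩
  have hSb : ∀ t ∈ Set.Ici (0 : ℝ), S (x t, y t) ≤ MS := by
    intro t ht
    have h1 := hq t
    have h2 : ‖gX t‖ ^ 2 / (2 * μ) ≤ Bx / (2 * μ) := by
      have h2μ : (0:ℝ) < 2 * μ := by linarith
      exact (div_le_div_iff_of_pos_right h2μ).mpr (hgXb t ht)
    rw [hMSdef]
    linarith [hVC1 t ht]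
  -- bound on the x-trajectory
  obtain ⟨Rx, hRxdef⟩ : ∃ b : ℝ, b = max 1 ((|MS| + C1 + C2) * 2 / μ) := ⟨_, rfl⟩
  have hxb : ∀ t ∈ Set.Ici (0 : ℝ), ‖x t‖ ≤ Rx := by
    intro t ht
    have hsc := strong_convex S hS hHessX 0 (x t) (y t)
    simp only [sub_zero] at hsc
    have hinner : -(C2 * ‖x t‖) ≤ ⟪gradX S (0, y t), x t⟫ := by
      have h5 := real_inner_le_norm (gradX S (0, y t)) (-(x t))
      rw [inner_neg_right, norm_neg] at h5
      have h6 : ‖gradX S (0, y t)‖ * ‖x t‖ ≤ C2 * ‖x t‖ :=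
        mul_le_mul_of_nonneg_right (hC2b (y t) (hyK t ht)) (norm_nonneg _)
      linarith
    have hkey : μ / 2 * ‖x t‖ ^ 2 ≤ |MS| + C1 + C2 * ‖x t‖ := by
      have h7 := hSb t ht
      have h8 := hSnegC1 t ht
      have h9 : MS ≤ |MS| := le_abs_self MS
      linarith
    rw [hRxdef]
    rcases le_or_gt ‖x t‖ 1 with hle | hgt
    · exact le_trans hle (le_max_left _ _)
    · have h10 : μ / 2 * ‖x t‖ ≤ |MS| + C1 + C2 := by
        nlinarith [abs_nonneg MS, hC1', hC2']
      have h11 : ‖x t‖ ≤ (|MS| + C1 + C2) * 2 / μ := by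
        rw [le_div_iff₀ hμ]
        linarith
      exact le_trans h11 (le_max_right _ _)
  -- conclusion
  rw [isBounded_iff_forall_norm_le]
  refine ⟨max Rx Ry, ?_⟩
  rintro q ⟨t, ht, rfl⟩
  have : ‖((x t, y t) : EuclideanSpace ℝ (Fin m) × EuclideanSpace ℝ (Fin n))‖
      = max ‖x t‖ ‖y t‖ := Prod.norm_def _
  rw [this]
  exact max_le_max (hxb t ht) (hRy (y t) (hyK t ht))
end

section
/- Let S : ℝᵐ × ℝⁿ → ℝ be C². Suppose there exist μ > 0 and ν < 0 such that ⟪u, ∇²ₓₓS(x,y) u⟫ ≥ μ‖u‖² for all (x,y), u ∈ ℝᵐ, and ⟪v, ∇²_yyS(x,y) v⟫ ≤ ν‖v‖² for all (x,y), v ∈ ℝⁿ. Then every solution of ẋ = -∇ₓS, ẏ = ∇_y S is bounded. -/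
set_option linter.unusedSectionVars false
set_option maxHeartbeats 1000000
set_option linter.unusedSectionVars false

open scoped RealInnerProductSpace
open InnerProductSpace ContinuousLinearMap

variable {E F : Type*} [NormedAddCommGroup E] [InnerProductSpace ℝ E] [CompleteSpace E]
  [NormedAddCommGroup F] [InnerProductSpace ℝ F] [CompleteSpace F]

/-- `L ↦ (toDual ℝ E).symm (L ∘L inl)` as a continuous linear map. -/
noncomputable def prOne (E F : Type*) [NormedAddCommGroup E] [InnerProductSpace ℝ E]
    [CompleteSpace E] [NormedAddCommGroup F] [InnerProductSpace ℝ F] :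
    ((E × F) →L[ℝ] ℝ) →L[ℝ] E :=
  LinearMap.mkContinuous
    { toFun := fun (L : (E × F) →L[ℝ] ℝ) => (toDual ℝ E).symm (L.comp (ContinuousLinearMap.inl ℝ E F))
      map_add' := fun L L' => by simp [ContinuousLinearMap.add_comp]
      map_smul' := fun c L => by
        simp [ContinuousLinearMap.smul_comp, map_smulₛₗ, starRingEnd_apply, star_trivial] }
    1 (fun L => by
      simp only [LinearMap.coe_mk, AddHom.coe_mk, one_mul]
      rw [LinearIsometryEquiv.norm_map]
      refine ContinuousLinearMap.opNorm_le_bound _ (norm_nonneg L) fun u => ?_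
      calc ‖(L.comp (ContinuousLinearMap.inl ℝ E F)) u‖ = ‖L (u, 0)‖ := by simp
        _ ≤ ‖L‖ * ‖(u, (0:F))‖ := L.le_opNorm _
        _ = ‖L‖ * ‖u‖ := by simp [Prod.norm_def])

noncomputable def prTwo (E F : Type*) [NormedAddCommGroup E] [InnerProductSpace ℝ E]
    [NormedAddCommGroup F] [InnerProductSpace ℝ F] [CompleteSpace F] :
    ((E × F) →L[ℝ] ℝ) →L[ℝ] F :=
  LinearMap.mkContinuous
    { toFun := fun (L : (E × F) →L[ℝ] ℝ) => (toDual ℝ F).symm (L.comp (ContinuousLinearMap.inr ℝ E F))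
      map_add' := fun L L' => by simp [ContinuousLinearMap.add_comp]
      map_smul' := fun c L => by
        simp [ContinuousLinearMap.smul_comp, map_smulₛₗ, starRingEnd_apply, star_trivial] }
    1 (fun L => by
      simp only [LinearMap.coe_mk, AddHom.coe_mk, one_mul]
      rw [LinearIsometryEquiv.norm_map]
      refine ContinuousLinearMap.opNorm_le_bound _ (norm_nonneg L) fun v => ?_
      calc ‖(L.comp (ContinuousLinearMap.inr ℝ E F)) v‖ = ‖L (0, v)‖ := by simp
        _ ≤ ‖L‖ * ‖((0:E), v)‖ := L.le_opNorm _
        _ = ‖L‖ * ‖v‖ := by simp [Prod.norm_def])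

lemma prOne_apply (L : (E × F) →L[ℝ] ℝ) :
    prOne E F L = (toDual ℝ E).symm (L.comp (ContinuousLinearMap.inl ℝ E F)) := rfl

lemma inner_prOne (L : (E × F) →L[ℝ] ℝ) (u : E) : ⟪u, prOne E F L⟫ = L (u, 0) := by
  rw [real_inner_comm, prOne_apply, toDual_symm_apply]
  simp

lemma prTwo_apply (L : (E × F) →L[ℝ] ℝ) :
    prTwo E F L = (toDual ℝ F).symm (L.comp (ContinuousLinearMap.inr ℝ E F)) := rfl

lemma inner_prTwo (L : (E × F) →L[ℝ] ℝ) (v : F) : ⟪v, prTwo E F L⟫ = L (0, v) := by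
  rw [real_inner_comm, prTwo_apply, toDual_symm_apply]
  simp

section Calc

variable {S : E × F → ℝ} (hS : ContDiff ℝ 2 S)
include hS

lemma gradPartial_eq (p : E × F) :
    gradient (fun x' => S (x', p.2)) p.1 = prOne E F (fderiv ℝ S p) := by
  have h1 : HasFDerivAt (fun x : E => (x, p.2)) (ContinuousLinearMap.inl ℝ E F) p.1 :=
    hasFDerivAt_prodMk_left _ _
  have h2 : HasFDerivAt S (fderiv ℝ S p) (p.1, p.2) := by
    simpa using ((hS.differentiable (by norm_num)) p).hasFDerivAt
  have h3 : HasFDerivAt (fun x : E => S (x, p.2))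
      ((fderiv ℝ S p).comp (ContinuousLinearMap.inl ℝ E F)) p.1 := h2.comp p.1 h1
  rw [gradient, h3.fderiv, prOne_apply]

lemma gradPartial2_eq (p : E × F) :
    gradient (fun y' => S (p.1, y')) p.2 = prTwo E F (fderiv ℝ S p) := by
  have h1 : HasFDerivAt (fun y : F => (p.1, y)) (ContinuousLinearMap.inr ℝ E F) p.2 :=
    hasFDerivAt_prodMk_right _ _
  have h2 : HasFDerivAt S (fderiv ℝ S p) (p.1, p.2) := by
    simpa using ((hS.differentiable (by norm_num)) p).hasFDerivAt
  have h3 : HasFDerivAt (fun y : F => S (p.1, y))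
      ((fderiv ℝ S p).comp (ContinuousLinearMap.inr ℝ E F)) p.2 := h2.comp p.2 h1
  rw [gradient, h3.fderiv, prTwo_apply]

lemma hasFDerivAt_D (p : E × F) :
    HasFDerivAt (fderiv ℝ S) (fderiv ℝ (fderiv ℝ S) p) p := by
  have : ContDiff ℝ 1 (fderiv ℝ S) := hS.fderiv_right (by norm_num)
  exact ((this.differentiable (by norm_num)) p).hasFDerivAt

lemma hasFDerivAt_g1 (p : E × F) :
    HasFDerivAt (fun q => gradient (fun x' => S (x', q.2)) q.1)
      ((prOne E F).comp (fderiv ℝ (fderiv ℝ S) p)) p := by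
  have h := (prOne E F).hasFDerivAt.comp p (((hS.fderiv_right (m := 1) (by norm_num)).differentiable (by norm_num) p).hasFDerivAt)
  exact h.congr_of_eventuallyEq (Filter.Eventually.of_forall fun q => (gradPartial_eq hS q))

lemma hasFDerivAt_g2 (p : E × F) :
    HasFDerivAt (fun q => gradient (fun y' => S (q.1, y')) q.2)
      ((prTwo E F).comp (fderiv ℝ (fderiv ℝ S) p)) p := by
  have h := (prTwo E F).hasFDerivAt.comp p (((hS.fderiv_right (m := 1) (by norm_num)).differentiable (by norm_num) p).hasFDerivAt)
  exact h.congr_of_eventuallyEq (Filter.Eventually.of_forall fun q => (gradPartial2_eq hS q))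

lemma hessPartialXX_eq (p : E × F) (u : E) :
    fderiv ℝ (fun x => gradient (fun x' => S (x', p.2)) x) p.1 u
      = prOne E F (fderiv ℝ (fderiv ℝ S) p (u, 0)) := by
  have h1 : HasFDerivAt (fun x : E => (x, p.2)) (ContinuousLinearMap.inl ℝ E F) p.1 :=
    hasFDerivAt_prodMk_left _ _
  have h2 : HasFDerivAt (fun q : E × F => gradient (fun x' => S (x', q.2)) q.1)
      ((prOne E F).comp (fderiv ℝ (fderiv ℝ S) p)) (p.1, p.2) := by
    simpa using hasFDerivAt_g1 hS p
  have h3 : HasFDerivAt (fun x : E => gradient (fun x' => S (x', p.2)) x)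
      (((prOne E F).comp (fderiv ℝ (fderiv ℝ S) p)).comp (ContinuousLinearMap.inl ℝ E F))
      p.1 := by exact h2.comp p.1 h1
  rw [h3.fderiv]
  rfl

lemma hessPartialYY_eq (p : E × F) (v : F) :
    fderiv ℝ (fun y => gradient (fun y' => S (p.1, y')) y) p.2 v
      = prTwo E F (fderiv ℝ (fderiv ℝ S) p (0, v)) := by
  have h1 : HasFDerivAt (fun y : F => (p.1, y)) (ContinuousLinearMap.inr ℝ E F) p.2 :=
    hasFDerivAt_prodMk_right _ _
  have h2 : HasFDerivAt (fun q : E × F => gradient (fun y' => S (q.1, y')) q.2)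
      ((prTwo E F).comp (fderiv ℝ (fderiv ℝ S) p)) (p.1, p.2) := by
    simpa using hasFDerivAt_g2 hS p
  have h3 : HasFDerivAt (fun y : F => gradient (fun y' => S (p.1, y')) y)
      (((prTwo E F).comp (fderiv ℝ (fderiv ℝ S) p)).comp (ContinuousLinearMap.inr ℝ E F))
      p.2 := by exact h2.comp p.2 h1
  rw [h3.fderiv]
  rfl

lemma sndDeriv_symm (p : E × F) (w w' : E × F) :
    fderiv ℝ (fderiv ℝ S) p w w' = fderiv ℝ (fderiv ℝ S) p w' w :=
  (hS.contDiffAt.isSymmSndFDerivAt (by simp)) w w'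

end Calc

section Mono

variable {S : E × F → ℝ} (hS : ContDiff ℝ 2 S) {μ ν : ℝ}

include hS in
lemma key_quad
    (hX : ∀ p (u : E), μ * ‖u‖ ^ 2 ≤ ⟪u, prOne E F (fderiv ℝ (fderiv ℝ S) p (u, 0))⟫)
    (hY : ∀ p (v : F), ⟪v, prTwo E F (fderiv ℝ (fderiv ℝ S) p (0, v))⟫ ≤ ν * ‖v‖ ^ 2)
    (p : E × F) (u : E) (v : F) :
    μ * ‖u‖ ^ 2 - ν * ‖v‖ ^ 2 ≤
      ⟪u, prOne E F (fderiv ℝ (fderiv ℝ S) p (u, v))⟫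
        - ⟪v, prTwo E F (fderiv ℝ (fderiv ℝ S) p (u, v))⟫ := by
  set B := fderiv ℝ (fderiv ℝ S) p with hB
  rw [inner_prOne, inner_prTwo]
  have hsplit : ((u, v) : E × F) = (u, (0 : F)) + ((0 : E), v) := by simp
  rw [hsplit, map_add]
  simp only [ContinuousLinearMap.add_apply]
  have hsymm : B ((0 : E), v) (u, (0 : F)) = B (u, (0 : F)) ((0 : E), v) :=
    sndDeriv_symm hS p _ _
  have h1 : μ * ‖u‖ ^ 2 ≤ B (u, (0 : F)) (u, (0 : F)) := by
    have := hX p u; rwa [inner_prOne] at this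
  have h2 : B ((0 : E), v) ((0 : E), v) ≤ ν * ‖v‖ ^ 2 := by
    have := hY p v; rwa [inner_prTwo] at this
  linarith

include hS in
lemma strong_mono
    (hX : ∀ p (u : E), μ * ‖u‖ ^ 2 ≤ ⟪u, prOne E F (fderiv ℝ (fderiv ℝ S) p (u, 0))⟫)
    (hY : ∀ p (v : F), ⟪v, prTwo E F (fderiv ℝ (fderiv ℝ S) p (0, v))⟫ ≤ ν * ‖v‖ ^ 2)
    (p q : E × F) :
    μ * ‖p.1 - q.1‖ ^ 2 + (-ν) * ‖p.2 - q.2‖ ^ 2 ≤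
      ⟪gradient (fun x' => S (x', p.2)) p.1 - gradient (fun x' => S (x', q.2)) q.1, p.1 - q.1⟫
        - ⟪gradient (fun y' => S (p.1, y')) p.2 - gradient (fun y' => S (q.1, y')) q.2,
            p.2 - q.2⟫ := by
  set w : E × F := p - q with hw
  set γ : ℝ → E × F := fun t => q + t • w with hγdef
  have hγ : ∀ t : ℝ, HasDerivAt γ w t := by
    intro t
    have : HasDerivAt (fun t : ℝ => t • w) ((1 : ℝ) • w) t := (hasDerivAt_id t).smul_const w
    simpa [hγdef] using this.const_add q
  set K : ℝ := μ * ‖w.1‖ ^ 2 + (-ν) * ‖w.2‖ ^ 2 with hK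
  set φ : ℝ → ℝ := fun t =>
    ⟪gradient (fun x' => S (x', (γ t).2)) (γ t).1, w.1⟫
      - ⟪gradient (fun y' => S ((γ t).1, y')) (γ t).2, w.2⟫ with hφdef
  have hφ : ∀ t : ℝ, HasDerivAt φ
      (⟪prOne E F (fderiv ℝ (fderiv ℝ S) (γ t) w), w.1⟫
        - ⟪prTwo E F (fderiv ℝ (fderiv ℝ S) (γ t) w), w.2⟫) t := by
    intro t
    have h1 : HasDerivAt (fun t => gradient (fun x' => S (x', (γ t).2)) (γ t).1)
        (prOne E F (fderiv ℝ (fderiv ℝ S) (γ t) w)) t := by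
      have := (hasFDerivAt_g1 hS (γ t)).comp_hasDerivAt t (hγ t)
      exact this
    have h2 : HasDerivAt (fun t => gradient (fun y' => S ((γ t).1, y')) (γ t).2)
        (prTwo E F (fderiv ℝ (fderiv ℝ S) (γ t) w)) t := by
      have := (hasFDerivAt_g2 hS (γ t)).comp_hasDerivAt t (hγ t)
      exact this
    have i1 := (HasDerivAt.inner ℝ h1 (hasDerivAt_const t w.1))
    have i2 := (HasDerivAt.inner ℝ h2 (hasDerivAt_const t w.2))
    exact (i1.sub i2).congr_deriv (by simp)
  have hderiv_ge : ∀ t : ℝ, K ≤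
      ⟪prOne E F (fderiv ℝ (fderiv ℝ S) (γ t) w), w.1⟫
        - ⟪prTwo E F (fderiv ℝ (fderiv ℝ S) (γ t) w), w.2⟫ := by
    intro t
    have := key_quad hS hX hY (γ t) w.1 w.2
    simp only [Prod.mk.eta] at this
    rw [real_inner_comm w.1, real_inner_comm w.2, hK]
    linarith
  -- ψ is monotone
  set ψ : ℝ → ℝ := fun t => φ t - K * t with hψdef
  have hψ : ∀ t : ℝ, HasDerivAt ψ
      ((⟪prOne E F (fderiv ℝ (fderiv ℝ S) (γ t) w), w.1⟫
        - ⟪prTwo E F (fderiv ℝ (fderiv ℝ S) (γ t) w), w.2⟫) - K) t := by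
    intro t
    exact (hφ t).sub ((hasDerivAt_id t).const_mul K |>.congr_deriv (by ring))
  have hmono : Monotone ψ := by
    apply monotone_of_deriv_nonneg
    · exact fun t => (hψ t).differentiableAt
    · intro t
      rw [(hψ t).deriv]
      have := hderiv_ge t
      linarith
  have h01 : ψ 0 ≤ ψ 1 := hmono zero_le_one
  have hγ0 : γ 0 = q := by simp [hγdef]
  have hγ1 : γ 1 = p := by simp [hγdef, hw]
  have hφ0 : φ 0 = ⟪gradient (fun x' => S (x', q.2)) q.1, w.1⟫
      - ⟪gradient (fun y' => S (q.1, y')) q.2, w.2⟫ := by rw [hφdef]; simp [hγ0]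
  have hφ1 : φ 1 = ⟪gradient (fun x' => S (x', p.2)) p.1, w.1⟫
      - ⟪gradient (fun y' => S (p.1, y')) p.2, w.2⟫ := by rw [hφdef]; simp [hγ1]
  have hw1 : w.1 = p.1 - q.1 := rfl
  have hw2 : w.2 = p.2 - q.2 := rfl
  rw [inner_sub_left, inner_sub_left]
  rw [hψdef] at h01
  simp only [mul_zero, mul_one, sub_zero] at h01
  rw [hφ0, hφ1, hK] at h01
  simp only [hw1, hw2] at h01
  linarith

include hS in
lemma main_aux
    (hX : ∀ p (u : E), μ * ‖u‖ ^ 2 ≤ ⟪u, prOne E F (fderiv ℝ (fderiv ℝ S) p (u, 0))⟫)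
    (hY : ∀ p (v : F), ⟪v, prTwo E F (fderiv ℝ (fderiv ℝ S) p (0, v))⟫ ≤ ν * ‖v‖ ^ 2)
    (hμ : 0 < μ) (hν : ν < 0)
    (x : ℝ → E) (y : ℝ → F)
    (hx : ∀ t ∈ Set.Ici (0 : ℝ), HasDerivAt x (-(gradient (fun x' => S (x', y t)) (x t))) t)
    (hy : ∀ t ∈ Set.Ici (0 : ℝ), HasDerivAt y (gradient (fun y' => S (x t, y')) (y t)) t) :
    Bornology.IsBounded ((fun t => (x t, y t)) '' Set.Ici (0 : ℝ)) := by
  have hp : ∀ t ∈ Set.Ici (0 : ℝ), HasDerivAt (fun t => (x t, y t))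
      ((-(gradient (fun x' => S (x', y t)) (x t)), gradient (fun y' => S (x t, y')) (y t))) t :=
    fun t ht => (hx t ht).prodMk (hy t ht)
  have hq1 : ∀ t ∈ Set.Ici (0 : ℝ),
      HasDerivAt (fun t => gradient (fun x' => S (x', y t)) (x t))
        (prOne E F (fderiv ℝ (fderiv ℝ S) (x t, y t)
          (-(gradient (fun x' => S (x', y t)) (x t)),
            gradient (fun y' => S (x t, y')) (y t)))) t := by
    intro t ht
    have := (hasFDerivAt_g1 hS (x t, y t)).comp_hasDerivAt t (hp t ht)
    exact this
  have hq2 : ∀ t ∈ Set.Ici (0 : ℝ),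
      HasDerivAt (fun t => gradient (fun y' => S (x t, y')) (y t))
        (prTwo E F (fderiv ℝ (fderiv ℝ S) (x t, y t)
          (-(gradient (fun x' => S (x', y t)) (x t)),
            gradient (fun y' => S (x t, y')) (y t)))) t := by
    intro t ht
    have := (hasFDerivAt_g2 hS (x t, y t)).comp_hasDerivAt t (hp t ht)
    exact this
  set V : ℝ → ℝ := fun t =>
    ⟪gradient (fun x' => S (x', y t)) (x t), gradient (fun x' => S (x', y t)) (x t)⟫
      + ⟪gradient (fun y' => S (x t, y')) (y t), gradient (fun y' => S (x t, y')) (y t)⟫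
    with hVdef
  have hVd : ∀ t ∈ Set.Ici (0 : ℝ), ∃ r ≤ 0, HasDerivAt V r t := by
    intro t ht
    have h1 := HasDerivAt.inner ℝ (hq1 t ht) (hq1 t ht)
    have h2 := HasDerivAt.inner ℝ (hq2 t ht) (hq2 t ht)
    refine ⟨_, ?_, h1.add h2⟩
    have hk := key_quad hS hX hY (x t, y t)
      (-(gradient (fun x' => S (x', y t)) (x t))) (gradient (fun y' => S (x t, y')) (y t))
    rw [inner_neg_left, norm_neg] at hk
    have hn1 : (0 : ℝ) ≤ μ * ‖gradient (fun x' => S (x', y t)) (x t)‖ ^ 2 := by positivity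
    have hn2 : (0 : ℝ) ≤ (-ν) * ‖gradient (fun y' => S (x t, y')) (y t)‖ ^ 2 := by
      apply mul_nonneg (by linarith) (by positivity)
    have hc1 := real_inner_comm
      (gradient (fun x' => S (x', y t)) (x t))
      (prOne E F (fderiv ℝ (fderiv ℝ S) (x t, y t)
        (-(gradient (fun x' => S (x', y t)) (x t)), gradient (fun y' => S (x t, y')) (y t))))
    have hc2 := real_inner_comm
      (gradient (fun y' => S (x t, y')) (y t))
      (prTwo E F (fderiv ℝ (fderiv ℝ S) (x t, y t)
        (-(gradient (fun x' => S (x', y t)) (x t)), gradient (fun y' => S (x t, y')) (y t))))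
    linarith
  have hVmono : AntitoneOn V (Set.Ici 0) := by
    apply antitoneOn_of_deriv_nonpos (convex_Ici 0)
    · intro t ht
      obtain ⟨r, _, hr⟩ := hVd t ht
      exact hr.continuousAt.continuousWithinAt
    · intro t ht
      obtain ⟨r, _, hr⟩ := hVd t (interior_subset ht)
      exact hr.differentiableAt.differentiableWithinAt
    · intro t ht
      obtain ⟨r, hr0, hr⟩ := hVd t (interior_subset ht)
      rw [hr.deriv]; exact hr0
  have hV0 : ∀ t ∈ Set.Ici (0 : ℝ), V t ≤ V 0 :=
    fun t ht => hVmono Set.self_mem_Ici ht ht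
  have hVnorm : ∀ t, V t = ‖gradient (fun x' => S (x', y t)) (x t)‖ ^ 2
      + ‖gradient (fun y' => S (x t, y')) (y t)‖ ^ 2 := by
    intro t
    simp only [hVdef, real_inner_self_eq_norm_sq]
  set M : ℝ := Real.sqrt (V 0) with hM
  have hMnn : 0 ≤ M := Real.sqrt_nonneg _
  have hbound1 : ∀ t ∈ Set.Ici (0 : ℝ), ‖gradient (fun x' => S (x', y t)) (x t)‖ ≤ M := by
    intro t ht
    rw [hM, ← Real.sqrt_sq (norm_nonneg (gradient (fun x' => S (x', y t)) (x t)))]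
    apply Real.sqrt_le_sqrt
    have := hV0 t ht
    rw [hVnorm t] at this
    nlinarith [sq_nonneg ‖gradient (fun y' => S (x t, y')) (y t)‖]
  have hbound2 : ∀ t ∈ Set.Ici (0 : ℝ), ‖gradient (fun y' => S (x t, y')) (y t)‖ ≤ M := by
    intro t ht
    rw [hM, ← Real.sqrt_sq (norm_nonneg (gradient (fun y' => S (x t, y')) (y t)))]
    apply Real.sqrt_le_sqrt
    have := hV0 t ht
    rw [hVnorm t] at this
    nlinarith [sq_nonneg ‖gradient (fun x' => S (x', y t)) (x t)‖]
  set c : ℝ := min μ (-ν) with hc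
  have hcpos : 0 < c := lt_min hμ (by linarith)
  set R : ℝ := 4 * M / c with hR
  have hkey : ∀ t ∈ Set.Ici (0 : ℝ), ‖x t - x 0‖ ≤ R ∧ ‖y t - y 0‖ ≤ R := by
    intro t ht
    have hsm := strong_mono hS hX hY (x t, y t) (x 0, y 0)
    simp only at hsm
    set a : ℝ := ‖x t - x 0‖ with ha
    set b : ℝ := ‖y t - y 0‖ with hb
    have ha0 : 0 ≤ a := norm_nonneg _
    have hb0 : 0 ≤ b := norm_nonneg _
    -- Cauchy–Schwarz bounds on the right side
    have cs1 : ⟪gradient (fun x' => S (x', y t)) (x t) - gradient (fun x' => S (x', y 0)) (x 0),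
        x t - x 0⟫ ≤ 2 * M * a := by
      calc _ ≤ ‖gradient (fun x' => S (x', y t)) (x t) - gradient (fun x' => S (x', y 0)) (x 0)‖
            * ‖x t - x 0‖ := real_inner_le_norm _ _
        _ ≤ (2 * M) * a := by
            apply mul_le_mul_of_nonneg_right _ ha0
            calc ‖_ - _‖ ≤ ‖gradient (fun x' => S (x', y t)) (x t)‖
                  + ‖gradient (fun x' => S (x', y 0)) (x 0)‖ := norm_sub_le _ _
              _ ≤ M + M := add_le_add (hbound1 t ht) (hbound1 0 Set.self_mem_Ici)
              _ = 2 * M := by ring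
    have cs2 : -(2 * M * b) ≤
        ⟪gradient (fun y' => S (x t, y')) (y t) - gradient (fun y' => S (x 0, y')) (y 0),
          y t - y 0⟫ := by
      have h := real_inner_le_norm
        (gradient (fun y' => S (x t, y')) (y t) - gradient (fun y' => S (x 0, y')) (y 0))
        (-(y t - y 0))
      rw [inner_neg_right, norm_neg] at h
      have hne : ‖gradient (fun y' => S (x t, y')) (y t)
          - gradient (fun y' => S (x 0, y')) (y 0)‖ ≤ 2 * M := by
        calc ‖_ - _‖ ≤ ‖gradient (fun y' => S (x t, y')) (y t)‖
              + ‖gradient (fun y' => S (x 0, y')) (y 0)‖ := norm_sub_le _ _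
          _ ≤ M + M := add_le_add (hbound2 t ht) (hbound2 0 Set.self_mem_Ici)
          _ = 2 * M := by ring
      nlinarith [norm_nonneg (gradient (fun y' => S (x t, y')) (y t)
        - gradient (fun y' => S (x 0, y')) (y 0))]
    have hquad : c * (a ^ 2 + b ^ 2) ≤ 2 * M * a + 2 * M * b := by
      have h1 : c * a ^ 2 ≤ μ * a ^ 2 :=
        mul_le_mul_of_nonneg_right (min_le_left _ _) (by positivity)
      have h2 : c * b ^ 2 ≤ (-ν) * b ^ 2 :=
        mul_le_mul_of_nonneg_right (min_le_right _ _) (by positivity)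
      linarith
    have hsum : a + b ≤ R := by
      have h2 : c * (a + b) ^ 2 ≤ 4 * M * (a + b) := by nlinarith [sq_nonneg (a - b)]
      rcases eq_or_lt_of_le (add_nonneg ha0 hb0) with h | h
      · rw [hR]; rw [← h]; positivity
      · rw [hR, le_div_iff₀ hcpos]
        calc (a + b) * c = (a + b)⁻¹ * (c * (a + b) ^ 2) := by
              field_simp
          _ ≤ (a + b)⁻¹ * (4 * M * (a + b)) := by
              exact mul_le_mul_of_nonneg_left h2 (le_of_lt (inv_pos.mpr h))
          _ = 4 * M := by field_simp
    exact ⟨by linarith, by linarith⟩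
  have hRnn : 0 ≤ R := by rw [hR]; positivity
  apply Bornology.IsBounded.subset
    ((Metric.isBounded_closedBall (x := x 0) (r := R)).prod
      (Metric.isBounded_closedBall (x := y 0) (r := R)))
  rintro ⟨u, v⟩ ⟨t, ht, hte⟩
  obtain ⟨h1, h2⟩ := hkey t ht
  simp only [Prod.mk.injEq] at hte
  constructor
  · simp only [Metric.mem_closedBall, dist_eq_norm, ← hte.1]
    exact h1
  · simp only [Metric.mem_closedBall, dist_eq_norm, ← hte.2]
    exact h2

end Mono





open scoped RealInnerProductSpace

theorem bounded_trajectories_convex_concave {m n : ℕ}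
    (S : EuclideanSpace ℝ (Fin m) × EuclideanSpace ℝ (Fin n) → ℝ)
    (hS : ContDiff ℝ 2 S) (μ ν : ℝ) (hμ : 0 < μ) (hν : ν < 0)
    (hHessX : ∀ p, ∀ u : EuclideanSpace ℝ (Fin m), μ * ‖u‖ ^ 2 ≤ ⟪u, hessXX S p u⟫)
    (hHessY : ∀ p, ∀ v : EuclideanSpace ℝ (Fin n), ⟪v, hessYY S p v⟫ ≤ ν * ‖v‖ ^ 2)
    (x : ℝ → EuclideanSpace ℝ (Fin m)) (y : ℝ → EuclideanSpace ℝ (Fin n))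
    (hx : ∀ t ∈ Set.Ici (0 : ℝ), HasDerivAt x (-(gradX S (x t, y t))) t)
    (hy : ∀ t ∈ Set.Ici (0 : ℝ), HasDerivAt y (gradY S (x t, y t)) t) :
    Bornology.IsBounded ((fun t => (x t, y t)) '' Set.Ici (0 : ℝ)) := by
  classical
  have hX : ∀ p (u : EuclideanSpace ℝ (Fin m)),
      μ * ‖u‖ ^ 2 ≤ ⟪u, prOne (EuclideanSpace ℝ (Fin m)) (EuclideanSpace ℝ (Fin n))
        (fderiv ℝ (fderiv ℝ S) p (u, 0))⟫ := by
    intro p u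
    have h := hHessX p u
    rwa [show (hessXX S p) u = prOne (EuclideanSpace ℝ (Fin m)) (EuclideanSpace ℝ (Fin n))
      (fderiv ℝ (fderiv ℝ S) p (u, 0)) from hessPartialXX_eq hS p u] at h
  have hY : ∀ p (v : EuclideanSpace ℝ (Fin n)),
      ⟪v, prTwo (EuclideanSpace ℝ (Fin m)) (EuclideanSpace ℝ (Fin n))
        (fderiv ℝ (fderiv ℝ S) p (0, v))⟫ ≤ ν * ‖v‖ ^ 2 := by
    intro p v
    have h := hHessY p v
    rwa [show (hessYY S p) v = prTwo (EuclideanSpace ℝ (Fin m)) (EuclideanSpace ℝ (Fin n))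
      (fderiv ℝ (fderiv ℝ S) p (0, v)) from hessPartialYY_eq hS p v] at h
  exact main_aux hS hX hY hμ hν x y hx hy
end

section
/- Let S : ℝᵐ × ℝⁿ → ℝ be C². Suppose there exist μ > 0 and ν < 0 with ⟪u, ∇²ₓₓS u⟫ ≥ μ‖u‖² and ⟪v, ∇²_yyS v⟫ ≤ ν‖v‖² everywhere. Then U(x) = max_y S(x,y) is well-defined and satisfies U(x) ≥ U(0) + ⟪∇U(0), x⟫ + (μ/2)‖x‖² for all x; in particular U is coercive. -/
open scoped RealInnerProductSpace

open InnerProductSpace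

variable {m n : ℕ}
local notation "E" => EuclideanSpace ℝ (Fin m)
local notation "F" => EuclideanSpace ℝ (Fin n)

theorem quad_lower (f f' g : ℝ → ℝ) (κ : ℝ)
    (hd : ∀ t, HasDerivAt f (f' t) t) (hd' : ∀ t, HasDerivAt f' (g t) t)
    (hg : ∀ t, κ ≤ g t) : f 0 + f' 0 + κ / 2 ≤ f 1 := by
  have hmono : ∀ s t : ℝ, s ≤ t → f' s + κ * (t - s) ≤ f' t := by
    intro s t hst
    have h1 : ∀ x, HasDerivAt (fun r => f' r - κ * r) (g x - κ) x := by
      intro x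
      exact ((hd' x).sub ((hasDerivAt_id x).const_mul κ)).congr_deriv (by simp)
    have hm : Monotone (fun r => f' r - κ * r) := by
      apply monotone_of_deriv_nonneg (fun x => (h1 x).differentiableAt)
      intro x
      rw [(h1 x).deriv]
      linarith [hg x]
    have := hm hst
    simp only at this
    nlinarith
  -- MVT on ψ t = f t - κ t²/2
  set ψ : ℝ → ℝ := fun t => f t - κ * t ^ 2 / 2 with hψ
  have hψd : ∀ t, HasDerivAt ψ (f' t - κ * t) t := by
    intro t
    have : HasDerivAt (fun t : ℝ => κ * t ^ 2 / 2) (κ * t) t := by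
      have := ((hasDerivAt_pow 2 t).const_mul κ).div_const 2
      simpa using this.congr_deriv (by ring)
    exact (hd t).sub this
  obtain ⟨c, hc, hceq⟩ := exists_hasDerivAt_eq_slope ψ (fun t => f' t - κ * t) one_pos
    (fun x _ => (hψd x).continuousAt.continuousWithinAt) (fun x _ => hψd x)
  have h0c : f' 0 + κ * (c - 0) ≤ f' c := hmono 0 c hc.1.le
  have : ψ 1 - ψ 0 = f' c - κ * c := by simpa using hceq.symm
  simp only [hψ] at this
  nlinarith

theorem ineqA (S : E × F → ℝ) (hS : ContDiff ℝ 2 S) (μ : ℝ)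
    (hHessX : ∀ p, ∀ u : E, μ * ‖u‖ ^ 2 ≤ ⟪u, hessXX S p u⟫)
    (y : F) (x₀ u : E) :
    S (x₀, y) + ⟪u, gradX S (x₀, y)⟫ + μ * ‖u‖ ^ 2 / 2 ≤ S (x₀ + u, y) := by
  have h2 : ContDiff ℝ 2 (fun x : E => S (x, y)) := hS.comp (contDiff_id.prodMk contDiff_const)
  set G : E → E := fun x => gradient (fun x' => S (x', y)) x with hG
  have hG1 : ContDiff ℝ 1 G :=
    ((toDual ℝ E).symm.contDiff.comp (h2.fderiv_right (m := 1) (by norm_num)) : )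
  set ℓ : ℝ → E := fun t => x₀ + t • u with hℓ
  have hℓd : ∀ t, HasDerivAt ℓ u t := by
    intro t
    exact (((hasDerivAt_id t).smul_const u).const_add x₀).congr_deriv (by simp)
  have hd : ∀ t, HasDerivAt (fun t => S (ℓ t, y)) ⟪u, gradX S (ℓ t, y)⟫ t := by
    intro t
    have h1 : HasFDerivAt (fun x : E => S (x, y))
        (toDual ℝ E (gradient (fun x' => S (x', y)) (ℓ t))) (ℓ t) :=
      ((h2.differentiable (by norm_num)).differentiableAt.hasGradientAt).hasFDerivAt
    have h3 := h1.comp_hasDerivAt t (hℓd t)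
    rw [real_inner_comm]
    simpa only [gradX, Function.comp_def, toDual_apply_apply] using h3
  have hd' : ∀ t, HasDerivAt (fun t => ⟪u, gradX S (ℓ t, y)⟫)
      ⟪u, hessXX S (ℓ t, y) u⟫ t := by
    intro t
    have hGd : HasFDerivAt G (hessXX S (ℓ t, y)) (ℓ t) := by
      have := (hG1.differentiable (by norm_num)).differentiableAt (x := ℓ t)
      exact this.hasFDerivAt
    have h4 := ((innerSL ℝ u).hasFDerivAt.comp (ℓ t) hGd).comp_hasDerivAt t (hℓd t)
    simpa only [gradX, hG, Function.comp_def, ContinuousLinearMap.coe_comp', innerSL_apply_apply] using h4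
  have := quad_lower (fun t => S (ℓ t, y)) (fun t => ⟪u, gradX S (ℓ t, y)⟫)
    (fun t => ⟪u, hessXX S (ℓ t, y) u⟫) (μ * ‖u‖ ^ 2) hd hd'
    (fun t => hHessX (ℓ t, y) u)
  simp only [hℓ, zero_smul, add_zero, one_smul] at this
  linarith

theorem ineqB (S : E × F → ℝ) (hS : ContDiff ℝ 2 S) (ν : ℝ)
    (hHessY : ∀ p, ∀ v : F, ⟪v, hessYY S p v⟫ ≤ ν * ‖v‖ ^ 2)
    (x : E) (y₀ v : F) :
    S (x, y₀ + v) + (-ν) * ‖v‖ ^ 2 / 2 ≤ S (x, y₀) + ⟪v, gradY S (x, y₀)⟫ := by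
  have h2 : ContDiff ℝ 2 (fun y : F => S (x, y)) := hS.comp (contDiff_const.prodMk contDiff_id)
  set G : F → F := fun y => gradient (fun y' => S (x, y')) y with hG
  have hG1 : ContDiff ℝ 1 G :=
    ((toDual ℝ F).symm.contDiff.comp (h2.fderiv_right (m := 1) (by norm_num)) : )
  set ℓ : ℝ → F := fun t => y₀ + t • v with hℓ
  have hℓd : ∀ t, HasDerivAt ℓ v t := by
    intro t
    exact (((hasDerivAt_id t).smul_const v).const_add y₀).congr_deriv (by simp)
  have hd : ∀ t, HasDerivAt (fun t => -S (x, ℓ t)) (-⟪v, gradY S (x, ℓ t)⟫) t := by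
    intro t
    have h1 : HasFDerivAt (fun y : F => S (x, y))
        (toDual ℝ F (gradient (fun y' => S (x, y')) (ℓ t))) (ℓ t) :=
      ((h2.differentiable (by norm_num)).differentiableAt.hasGradientAt).hasFDerivAt
    have h3 := (h1.comp_hasDerivAt t (hℓd t)).neg
    rw [real_inner_comm]
    simpa only [gradY, Function.comp_def, toDual_apply_apply, Pi.neg_def] using h3
  have hd' : ∀ t, HasDerivAt (fun t => -⟪v, gradY S (x, ℓ t)⟫)
      (-⟪v, hessYY S (x, ℓ t) v⟫) t := by
    intro t
    have hGd : HasFDerivAt G (hessYY S (x, ℓ t)) (ℓ t) :=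
      ((hG1.differentiable (by norm_num)).differentiableAt (x := ℓ t)).hasFDerivAt
    have h4 := (((innerSL ℝ v).hasFDerivAt.comp (ℓ t) hGd).comp_hasDerivAt t (hℓd t)).neg
    simpa only [gradY, hG, Function.comp_def, ContinuousLinearMap.coe_comp', innerSL_apply_apply, Pi.neg_def] using h4
  have := quad_lower (fun t => -S (x, ℓ t)) (fun t => -⟪v, gradY S (x, ℓ t)⟫)
    (fun t => -⟪v, hessYY S (x, ℓ t) v⟫) (-(ν * ‖v‖ ^ 2)) hd hd'
    (fun t => neg_le_neg (hHessY (x, ℓ t) v))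
  simp only [hℓ, zero_smul, add_zero, one_smul] at this
  linarith

theorem gradX_cont (S : E × F → ℝ) (hS : ContDiff ℝ 2 S) : Continuous (gradX S) := by
  have heq : ∀ p : E × F, gradX S p =
      (toDual ℝ E).symm ((fderiv ℝ S p).comp (ContinuousLinearMap.inl ℝ E F)) := by
    intro p
    have h1 : HasFDerivAt (fun x : E => S (x, p.2))
        ((fderiv ℝ S p).comp (ContinuousLinearMap.inl ℝ E F)) p.1 :=
      ((hS.differentiable (by norm_num)).differentiableAt.hasFDerivAt).comp p.1
        (hasFDerivAt_prodMk_left p.1 p.2)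
    rw [gradX, gradient, h1.fderiv]
  rw [continuous_congr heq]
  exact (toDual ℝ E).symm.continuous.comp
    ((hS.continuous_fderiv (by norm_num)).clm_comp continuous_const)

theorem gradY_cont (S : E × F → ℝ) (hS : ContDiff ℝ 2 S) : Continuous (gradY S) := by
  have heq : ∀ p : E × F, gradY S p =
      (toDual ℝ F).symm ((fderiv ℝ S p).comp (ContinuousLinearMap.inr ℝ E F)) := by
    intro p
    have h1 : HasFDerivAt (fun y : F => S (p.1, y))
        ((fderiv ℝ S p).comp (ContinuousLinearMap.inr ℝ E F)) p.2 :=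
      ((hS.differentiable (by norm_num)).differentiableAt.hasFDerivAt).comp p.2
        (hasFDerivAt_prodMk_right p.1 p.2)
    rw [gradY, gradient, h1.fderiv]
  rw [continuous_congr heq]
  exact (toDual ℝ F).symm.continuous.comp
    ((hS.continuous_fderiv (by norm_num)).clm_comp continuous_const)

theorem exists_max (S : E × F → ℝ) (hS : ContDiff ℝ 2 S) (ν : ℝ) (hν : ν < 0)
    (hHessY : ∀ p, ∀ v : F, ⟪v, hessYY S p v⟫ ≤ ν * ‖v‖ ^ 2) (x : E) :
    ∃ y₀ : F, ∀ y, S (x, y) ≤ S (x, y₀) := by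
  have hcont : Continuous (fun y : F => S (x, y)) :=
    hS.continuous.comp (Continuous.prodMk_right x)
  set c1 : ℝ := S (x, 0) with hc1
  set c2 : ℝ := ‖gradY S (x, 0)‖ with hc2
  have hbound : ∀ y : F, S (x, y) ≤ c1 + c2 * ‖y‖ + ν / 2 * ‖y‖ ^ 2 := by
    intro y
    have h1 := ineqB S hS ν hHessY x 0 y
    simp only [zero_add] at h1
    have h2 : ⟪y, gradY S (x, 0)⟫ ≤ c2 * ‖y‖ := by
      calc ⟪y, gradY S (x, 0)⟫ ≤ ‖y‖ * ‖gradY S (x, 0)‖ := real_inner_le_norm _ _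
      _ = c2 * ‖y‖ := by ring
    nlinarith [h1, h2]
  have hlim : Filter.Tendsto (fun y : F => S (x, y)) (Filter.cocompact F) Filter.atBot := by
    have hφ : Filter.Tendsto (fun r : ℝ => c1 + (c2 + ν / 2 * r) * r) Filter.atTop
        Filter.atBot := by
      apply Filter.tendsto_atBot_add_const_left
      exact Filter.Tendsto.atBot_mul_atTop₀
        (Filter.tendsto_atBot_add_const_left _ c2
          ((Filter.tendsto_const_mul_atBot_of_neg (by linarith : ν / 2 < 0)).2
            Filter.tendsto_id)) Filter.tendsto_id
    have hcomp := hφ.comp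
      (tendsto_norm_cocompact_atTop : Filter.Tendsto norm (Filter.cocompact F) Filter.atTop)
    apply Filter.tendsto_atBot_mono _ hcomp
    intro y
    have := hbound y
    simp only [Function.comp]
    nlinarith [this]
  obtain ⟨y₀, hy₀⟩ := hcont.exists_forall_ge hlim
  exact ⟨y₀, hy₀⟩

theorem main (S : E × F → ℝ)
    (hS : ContDiff ℝ 2 S) (μ ν : ℝ) (hμ : 0 < μ) (hν : ν < 0)
    (hHessX : ∀ p, ∀ u : E, μ * ‖u‖ ^ 2 ≤ ⟪u, hessXX S p u⟫)
    (hHessY : ∀ p, ∀ v : F, ⟪v, hessYY S p v⟫ ≤ ν * ‖v‖ ^ 2) :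
    ∃ U : E → ℝ,
      (∀ x, ∃ y₀, S (x, y₀) = U x ∧ ∀ y, S (x, y) ≤ U x) ∧
      (∀ x, U 0 + ⟪gradient U 0, x⟫ + (μ / 2) * ‖x‖ ^ 2 ≤ U x) ∧
      Filter.Tendsto U (Filter.cocompact (EuclideanSpace ℝ (Fin m))) Filter.atTop := by
  choose ys hys using exists_max S hS ν hν hHessY
  set U : E → ℝ := fun x => S (x, ys x) with hU
  -- gradY vanishes at maximizers
  have hgY0 : ∀ x, gradY S (x, ys x) = 0 := by
    intro x
    have hmax : IsLocalMax (fun y => S (x, y)) (ys x) :=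
      Filter.Eventually.of_forall (fun y => hys x y)
    have h0 := hmax.fderiv_eq_zero
    simp only [gradY, gradient, h0, map_zero]
  set g : E := gradX S (0, ys 0) with hg
  -- key lower bound
  have hlow : ∀ x : E, U 0 + ⟪g, x⟫ + μ / 2 * ‖x‖ ^ 2 ≤ U x := by
    intro x
    have h1 := ineqA S hS μ hHessX (ys 0) 0 x
    simp only [zero_add] at h1
    have h2 : S (x, ys 0) ≤ U x := hys x (ys 0)
    rw [real_inner_comm]
    nlinarith [h1, h2]
  -- upper bound
  have hupp : ∀ x : E, U x - U 0 - ⟪g, x⟫ ≤ ‖x‖ * ‖gradX S (x, ys x) - g‖ := by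
    intro x
    have h1 := ineqA S hS μ hHessX (ys x) x (-x)
    simp only [add_neg_cancel, norm_neg, inner_neg_left] at h1
    have h2 : S (0, ys x) ≤ U 0 := hys 0 (ys x)
    have h3 : ⟪x, gradX S (x, ys x)⟫ - ⟪g, x⟫ = ⟪x, gradX S (x, ys x) - g⟫ := by
      rw [inner_sub_right, real_inner_comm g x]
    have h4 : ⟪x, gradX S (x, ys x) - g⟫ ≤ ‖x‖ * ‖gradX S (x, ys x) - g‖ :=
      real_inner_le_norm _ _
    nlinarith [h1, h2]
  -- continuity of maximizer at 0
  have hysbound : ∀ x : E, ‖ys x - ys 0‖ ≤ ‖gradY S (x, ys 0)‖ / (-ν) := by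
    intro x
    set d : F := ys x - ys 0 with hd
    have h1 := ineqB S hS ν hHessY x (ys 0) d
    have h2 := ineqB S hS ν hHessY x (ys x) (-d)
    simp only [hd, add_sub_cancel] at h1
    have hsub : ys x + -(ys x - ys 0) = ys 0 := by abel
    rw [hsub, hgY0 x, inner_zero_right] at h2
    simp only [norm_neg] at h2
    have h3 : (-ν) * ‖d‖ ^ 2 ≤ ⟪d, gradY S (x, ys 0)⟫ := by nlinarith [h1, h2]
    have h4 : ⟪d, gradY S (x, ys 0)⟫ ≤ ‖d‖ * ‖gradY S (x, ys 0)‖ := real_inner_le_norm _ _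
    rcases eq_or_ne d 0 with h | h
    · simp only [h, norm_zero]
      exact div_nonneg (norm_nonneg _) (by linarith)
    · have hdpos : 0 < ‖d‖ := norm_pos_iff.2 h
      rw [le_div_iff₀ (by linarith : (0:ℝ) < -ν)]
      nlinarith [h3, h4]
  have hys0 : gradY S (0, ys 0) = 0 := hgY0 0
  have hystend : Filter.Tendsto ys (nhds 0) (nhds (ys 0)) := by
    rw [tendsto_iff_norm_sub_tendsto_zero]
    apply squeeze_zero (fun x => norm_nonneg _) hysbound
    have hc : Continuous (fun x : E => ‖gradY S (x, ys 0)‖ / (-ν)) :=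
      (((gradY_cont S hS).comp (Continuous.prodMk_left (ys 0))).norm).div_const _
    have := hc.tendsto 0
    simpa [hys0] using this
  -- the gradient of U at 0 is g
  have hgrad : HasGradientAt U g 0 := by
    rw [hasGradientAt_iff_isLittleO]
    have htend : Filter.Tendsto (fun x : E => ‖gradX S (x, ys x) - g‖) (nhds 0) (nhds 0) := by
      have h1 : Filter.Tendsto (fun x : E => (x, ys x)) (nhds 0) (nhds (0, ys 0)) :=
        Filter.Tendsto.prodMk_nhds Filter.tendsto_id hystend
      have h2 := ((gradX_cont S hS).tendsto (0, ys 0)).comp h1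
      have h3 : Filter.Tendsto (fun x : E => gradX S (x, ys x) - g) (nhds 0) (nhds 0) := by
        simpa [hg] using h2.sub_const g
      simpa using h3.norm
    rw [Asymptotics.isLittleO_iff]
    intro c hc
    have hev : ∀ᶠ x : E in nhds 0, ‖gradX S (x, ys x) - g‖ ≤ c := by
      exact htend.eventually (eventually_le_nhds (by linarith : (0:ℝ) < c))
    filter_upwards [hev] with x hx
    have hl := hlow x
    have hu := hupp x
    rw [Real.norm_eq_abs, abs_le]
    constructor
    · simp only [sub_zero]
      nlinarith [sq_nonneg ‖x‖, norm_nonneg x, mul_nonneg hc.le (norm_nonneg x)]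
    · simp only [sub_zero]
      calc U x - U 0 - ⟪g, x⟫ ≤ ‖x‖ * ‖gradX S (x, ys x) - g‖ := hupp x
      _ ≤ ‖x‖ * c := mul_le_mul_of_nonneg_left hx (norm_nonneg x)
      _ = c * ‖x‖ := by ring
  refine ⟨U, fun x => ⟨ys x, rfl, hys x⟩, ?_, ?_⟩
  · rw [show gradient U 0 = g from hgrad.gradient]
    exact fun x => by linarith [hlow x]
  -- coercivity
  have hφ : Filter.Tendsto (fun r : ℝ => U 0 + (μ / 2 * r - ‖g‖) * r) Filter.atTop
      Filter.atTop := by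
    apply Filter.tendsto_atTop_add_const_left
    exact Filter.Tendsto.atTop_mul_atTop₀
      (Filter.tendsto_atTop_add_const_right _ (-‖g‖)
        (Filter.Tendsto.const_mul_atTop (by linarith) Filter.tendsto_id)) Filter.tendsto_id
  apply Filter.tendsto_atTop_mono _ (hφ.comp
    (tendsto_norm_cocompact_atTop : Filter.Tendsto norm (Filter.cocompact E) Filter.atTop))
  intro x
  have h1 := hlow x
  have h2 : -(‖g‖ * ‖x‖) ≤ ⟪g, x⟫ := neg_le_of_abs_le (abs_real_inner_le_norm g x)
  simp only [Function.comp]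
  nlinarith [h1, h2]


theorem maxY_strongly_convex_coercive {m n : ℕ}
    (S : EuclideanSpace ℝ (Fin m) × EuclideanSpace ℝ (Fin n) → ℝ)
    (hS : ContDiff ℝ 2 S) (μ ν : ℝ) (hμ : 0 < μ) (hν : ν < 0)
    (hHessX : ∀ p, ∀ u : EuclideanSpace ℝ (Fin m), μ * ‖u‖ ^ 2 ≤ ⟪u, hessXX S p u⟫)
    (hHessY : ∀ p, ∀ v : EuclideanSpace ℝ (Fin n), ⟪v, hessYY S p v⟫ ≤ ν * ‖v‖ ^ 2) :
    ∃ U : EuclideanSpace ℝ (Fin m) → ℝ,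
      (∀ x, ∃ y₀, S (x, y₀) = U x ∧ ∀ y, S (x, y) ≤ U x) ∧
      (∀ x, U 0 + ⟪gradient U 0, x⟫ + (μ / 2) * ‖x‖ ^ 2 ≤ U x) ∧
      Filter.Tendsto U (Filter.cocompact (EuclideanSpace ℝ (Fin m))) Filter.atTop := by
  exact main S hS μ ν hμ hν hHessX hHessY
end
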